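/- arXiv:2207.05125 — 2 statements merged into one kernel-verified Lean document; each statement's English description precedes it below -/
import Mathlib

section
/- The transversal Ω₀(Λ) = {P ∈ Ω*(Λ) : e ∈ P} is an abstract transversal for the transformation groupoid G ⋉ Ω*(Λ): it is closed, meets every orbit of the action, and with Z = {(x,P) : x⁻¹ ∈ P, P ∈ Ω*(Λ)}, the restricted source map Z → Ω*(Λ) and restricted range map Z → Ω₀(Λ) are open maps. -/
/-!
`Ω₀(Λ)` is cut out of the hull by `e ∈ P`, a Fell-closed condition, and a nonempty `P` is moved
into `Ω₀(Λ)` by the inverse of any of its points. The action map `(x, P) ↦ xP` is open, being a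
union over `x` of homeomorphisms, and `Z` is exactly its preimage of `Ω₀(Λ)`; this gives
openness of the range map. For the source map, the part of a box `U × V` lying in `Z` projects
onto `V ∩ {P | P ∩ U⁻¹ ≠ ∅}`, which is Fell-open.
-/

open Pointwise Set MeasureTheory Filter Topology
open scoped ENNReal

set_option linter.unusedSectionVars false
set_option linter.unusedVariables false

variable {G : Type*} [TopologicalSpace G] [Group G] [IsTopologicalGroup G]

/-- The space `C(G)` of closed subsets of `G`. -/
def CF (G : Type*) [TopologicalSpace G] := {s : Set G // IsClosed s}

/-- The subbasis of the Chabauty–Fell topology on `C(G)`: the sets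
`O_K = {C | C ∩ K = ∅}` for `K` compact and `O^V = {C | C ∩ V ≠ ∅}` for `V` open. -/
def FellBasis (G : Type*) [TopologicalSpace G] : Set (Set (CF G)) :=
  {U | ∃ K : Set G, IsCompact K ∧ U = {C : CF G | C.1 ∩ K = ∅}} ∪
  {U | ∃ V : Set G, IsOpen V ∧ U = {C : CF G | (C.1 ∩ V).Nonempty}}

/-- The Chabauty–Fell topology. -/
instance : TopologicalSpace (CF G) := TopologicalSpace.generateFrom (FellBasis G)

/-- Left translation of a closed set. -/
noncomputable def CF.smul (x : G) (C : CF G) : CF G := ⟨x • C.1, C.2.smul x⟩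

/-- The hull of a point set `Λ`: the Chabauty–Fell closure of the set of left
translates of `Λ`. -/
def hullSet (Λ : Set G) : Set (CF G) := closure {C : CF G | ∃ x : G, C.1 = x • Λ}

/-- The punctured hull `Ω*(Λ)`: the hull minus the empty set. -/
def phull (Λ : Set G) : Set (CF G) := {C ∈ hullSet Λ | C.1.Nonempty}

/-- The transversal `Ω₀(Λ) = {P ∈ hull : e ∈ P}`. -/
def transv (Λ : Set G) : Set (CF G) := {C ∈ hullSet Λ | (1 : G) ∈ C.1}

/-- `Λ` is relatively separated: `sup_x |Λ ∩ xU| < ∞` for some nonempty open `U`. -/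
def RelSep (Λ : Set G) : Prop :=
  ∃ U : Set G, IsOpen U ∧ U.Nonempty ∧ ∃ ℓ : ℕ, ∀ x : G, (Λ ∩ x • U).encard ≤ ℓ

/-- `Λ` is separated: `|Λ ∩ xU| ≤ 1` for all `x` for some open identity neighborhood. -/
def Separated (Λ : Set G) : Prop :=
  ∃ U : Set G, IsOpen U ∧ (1 : G) ∈ U ∧ ∀ x : G, (Λ ∩ x • U).encard ≤ 1

lemma smul_inter_empty (x : G) (s K : Set G) : (x • s) ∩ K = ∅ ↔ s ∩ (x⁻¹ • K) = ∅ := by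
  have h : (x • s) ∩ K = x • (s ∩ x⁻¹ • K) := by
    rw [Set.smul_set_inter, smul_inv_smul]
  rw [h, Set.smul_set_eq_empty]

lemma smul_inter_nonempty (x : G) (s V : Set G) :
    ((x • s) ∩ V).Nonempty ↔ (s ∩ (x⁻¹ • V)).Nonempty := by
  have h : (x • s) ∩ V = x • (s ∩ x⁻¹ • V) := by
    rw [Set.smul_set_inter, smul_inv_smul]
  rw [h, Set.smul_set_nonempty]

/-- Left translation is continuous for the Chabauty–Fell topology. -/
lemma continuous_CFsmul (x : G) : Continuous (fun C : CF G => CF.smul x C) := by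
  apply continuous_generateFrom_iff.mpr
  rintro U (⟨K, hK, rfl⟩ | ⟨V, hV, rfl⟩)
  · have h : (fun C : CF G => CF.smul x C) ⁻¹' {C : CF G | C.1 ∩ K = ∅}
        = {C : CF G | C.1 ∩ (x⁻¹ • K) = ∅} := by
      ext C; exact smul_inter_empty x C.1 K
    rw [h]
    exact TopologicalSpace.isOpen_generateFrom_of_mem (Or.inl ⟨x⁻¹ • K, hK.smul x⁻¹, rfl⟩)
  · have h : (fun C : CF G => CF.smul x C) ⁻¹' {C : CF G | (C.1 ∩ V).Nonempty}
        = {C : CF G | (C.1 ∩ (x⁻¹ • V)).Nonempty} := by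
      ext C; exact smul_inter_nonempty x C.1 V
    rw [h]
    exact TopologicalSpace.isOpen_generateFrom_of_mem (Or.inr ⟨x⁻¹ • V, hV.smul x⁻¹, rfl⟩)

/-- The hull is invariant under left translations. -/
lemma smul_mem_hullSet {Λ : Set G} {C : CF G} (h : C ∈ hullSet Λ) (x : G) :
    CF.smul x C ∈ hullSet Λ := by
  refine map_mem_closure (continuous_CFsmul x) h ?_
  rintro D ⟨y, hy⟩
  exact ⟨x * y, by simp [CF.smul, hy, mul_smul]⟩

lemma one_mem_smul {G : Type*} [TopologicalSpace G] [Group G] [IsTopologicalGroup G]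
    {x : G} {s : Set G} (h : x⁻¹ ∈ s) : (1 : G) ∈ x • s :=
  Set.mem_smul_set.mpr ⟨x⁻¹, h, by simp⟩

/-- The groupoid `G(Λ)` of a point set: pairs `(x, P)` with `P` in the transversal and
`x⁻¹ ∈ P` (so that both `P` and `xP` contain the identity). -/
def Deloid {G : Type*} [TopologicalSpace G] [Group G] [IsTopologicalGroup G] (Λ : Set G) :
    Set (G × CF G) :=
  {p | p.2 ∈ transv Λ ∧ (p.1)⁻¹ ∈ p.2.1}

/-- The source map of the groupoid `G(Λ)`: `s(x, P) = P`. -/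
def deloidSource {G : Type*} [TopologicalSpace G] [Group G] [IsTopologicalGroup G] (Λ : Set G)
    (p : ↥(Deloid Λ)) : ↥(transv Λ) := ⟨p.1.2, p.2.1⟩

/-- The range map of the groupoid `G(Λ)`: `r(x, P) = xP`. -/
noncomputable def deloidRange {G : Type*} [TopologicalSpace G] [Group G] [IsTopologicalGroup G]
    (Λ : Set G) (p : ↥(Deloid Λ)) : ↥(transv Λ) :=
  ⟨CF.smul p.1.1 p.1.2, smul_mem_hullSet p.2.1.1 p.1.1, one_mem_smul p.2.2⟩


theorem Set.MapsTo.isOpenMap_restrict {X Y : Type*} [TopologicalSpace X] [TopologicalSpace Y]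
    {f : X → Y} {s : Set X} {t : Set Y} (h : MapsTo f s t)
    (hf : ∀ u, IsOpen u → ∃ v, IsOpen v ∧ f '' (u ∩ s) = v ∩ t) :
    IsOpenMap (h.restrict f s t) := by
  intro o ho
  obtain ⟨u, hu, rfl⟩ := isOpen_induced_iff.mp ho
  obtain ⟨v, hv, hfv⟩ := hf u hu
  suffices h.restrict f s t '' (Subtype.val ⁻¹' u) = Subtype.val ⁻¹' v from
    this ▸ hv.preimage continuous_subtype_val
  ext ⟨y, hy⟩
  have hy' : y ∈ f '' (u ∩ s) ↔ y ∈ v := by simp [hfv, hy]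
  simp only [mem_image, mem_preimage, Subtype.exists, ← hy', MapsTo.restrict, Subtype.ext_iff,
    Subtype.map, mem_inter_iff]
  tauto

namespace CF

lemma isOpen_setOf_inter_eq_empty {K : Set G} (hK : IsCompact K) :
    IsOpen {C : CF G | C.1 ∩ K = ∅} :=
  TopologicalSpace.isOpen_generateFrom_of_mem (Or.inl ⟨K, hK, rfl⟩)

lemma isOpen_setOf_inter_nonempty {V : Set G} (hV : IsOpen V) :
    IsOpen {C : CF G | (C.1 ∩ V).Nonempty} :=
  TopologicalSpace.isOpen_generateFrom_of_mem (Or.inr ⟨V, hV, rfl⟩)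

lemma isClosed_setOf_mem (g : G) : IsClosed {C : CF G | g ∈ C.1} := by
  rw [← isOpen_compl_iff]
  convert isOpen_setOf_inter_eq_empty (isCompact_singleton (x := g)) using 1
  ext C
  simp

noncomputable def smulHomeomorph (x : G) : CF G ≃ₜ CF G where
  toFun := CF.smul x
  invFun := CF.smul x⁻¹
  left_inv C := Subtype.ext (inv_smul_smul x C.1)
  right_inv C := Subtype.ext (smul_inv_smul x C.1)
  continuous_toFun := continuous_CFsmul x
  continuous_invFun := continuous_CFsmul x⁻¹

@[simp] lemma smulHomeomorph_apply (x : G) (C : CF G) : smulHomeomorph x C = CF.smul x C := rfl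

@[simp] lemma smulHomeomorph_symm_apply (x : G) (C : CF G) :
    (smulHomeomorph x).symm C = CF.smul x⁻¹ C := rfl

lemma isOpenMap_smul : IsOpenMap (fun q : G × CF G => CF.smul q.1 q.2) := by
  intro W hW
  have hW_eq : (fun q : G × CF G => CF.smul q.1 q.2) '' W =
      ⋃ x : G, smulHomeomorph x '' (Prod.mk x ⁻¹' W) := by
    ext Q
    simp only [mem_image, mem_iUnion, mem_preimage, Prod.exists]
    rfl
  rw [hW_eq]
  exact isOpen_iUnion fun x =>
    (smulHomeomorph x).isOpenMap _ (hW.preimage (Continuous.prodMk_right x))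

lemma isOpen_image_snd_inter_setOf_inv_mem {W : Set (G × CF G)} (hW : IsOpen W) :
    IsOpen (Prod.snd '' (W ∩ {q | q.1⁻¹ ∈ q.2.1})) := by
  rw [isOpen_iff_forall_mem_open]
  rintro _ ⟨⟨x, P⟩, ⟨hxP, hx⟩, rfl⟩
  obtain ⟨U, V, hU, hV, hxU, hPV, hUV⟩ := isOpen_prod_iff.mp hW x P hxP
  refine ⟨V ∩ {C | (C.1 ∩ U⁻¹).Nonempty}, ?_, hV.inter (isOpen_setOf_inter_nonempty hU.inv),
    hPV, x⁻¹, hx, inv_mem_inv.mpr hxU⟩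
  rintro Q ⟨hQV, z, hzQ, hzU⟩
  exact ⟨(z⁻¹, Q), ⟨hUV ⟨hzU, hQV⟩, by simpa using hzQ⟩, rfl⟩

end CF

lemma isClosed_transv (Λ : Set G) : IsClosed (transv Λ) :=
  isClosed_closure.inter (CF.isClosed_setOf_mem 1)

lemma exists_smul_mem_transv {Λ : Set G} {C : CF G} (hC : C ∈ phull Λ) :
    ∃ x : G, CF.smul x C ∈ transv Λ := by
  obtain ⟨hC, p, hp⟩ := hC
  exact ⟨p⁻¹, smul_mem_hullSet hC p⁻¹, p, hp, inv_mul_cancel p⟩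

lemma smul_mem_transv_iff {Λ : Set G} {x : G} {P : CF G} :
    CF.smul x P ∈ transv Λ ↔ P ∈ phull Λ ∧ x⁻¹ ∈ P.1 := by
  have hinv : x⁻¹ ∈ P.1 ↔ (1 : G) ∈ x • P.1 := by
    rw [mem_smul_set_iff_inv_smul_mem, smul_eq_mul, mul_one]
  refine ⟨fun ⟨hxP, h1⟩ => ⟨⟨?_, x⁻¹, hinv.mpr h1⟩, hinv.mpr h1⟩,
    fun ⟨hP, hx⟩ => ⟨smul_mem_hullSet hP.1 x, hinv.mp hx⟩⟩
  simpa only [CF.smulHomeomorph_symm_apply, CF.smulHomeomorph_apply]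
    using (CF.smulHomeomorph x).symm_apply_apply P ▸ smul_mem_hullSet hxP x⁻¹

theorem statement7_general {G : Type*} [TopologicalSpace G] [Group G] [IsTopologicalGroup G]
    (Λ : Set G) :
    IsClosed (transv Λ) ∧
    (∀ C ∈ phull Λ, ∃ x : G, CF.smul x C ∈ transv Λ) ∧
    IsOpenMap (fun p : ↥{q : G × CF G | q.2 ∈ phull Λ ∧ (q.1)⁻¹ ∈ q.2.1} =>
      (⟨p.1.2, p.2.1⟩ : ↥(phull Λ))) ∧
    IsOpenMap (fun p : ↥{q : G × CF G | q.2 ∈ phull Λ ∧ (q.1)⁻¹ ∈ q.2.1} =>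
      (⟨CF.smul p.1.1 p.1.2,
        smul_mem_hullSet p.2.1.1 p.1.1, one_mem_smul p.2.2⟩ : ↥(transv Λ))) := by
  set Z := {q : G × CF G | q.2 ∈ phull Λ ∧ (q.1)⁻¹ ∈ q.2.1}
  refine ⟨isClosed_transv Λ, fun C hC => exists_smul_mem_transv hC, ?_, ?_⟩
  · have hmaps : MapsTo Prod.snd Z (phull Λ) := fun q hq => hq.1
    refine hmaps.isOpenMap_restrict fun W hW =>
      ⟨_, CF.isOpen_image_snd_inter_setOf_inv_mem hW, ?_⟩
    rw [← image_inter_preimage, inter_assoc, inter_comm {q | _}]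
    rfl
  · have hZ : Z = (fun q : G × CF G => CF.smul q.1 q.2) ⁻¹' transv Λ :=
      ext fun q => smul_mem_transv_iff.symm
    refine (hZ ▸ mapsTo_preimage _ _).isOpenMap_restrict fun W hW =>
      ⟨_, CF.isOpenMap_smul W hW, ?_⟩
    rw [hZ, image_inter_preimage]

/-- The transversal `Ω₀(Λ)` is an abstract transversal for the transformation groupoid
`G ⋉ Ω*(Λ)`: it is closed, meets every orbit, and with
`Z = {(x,P) : P ∈ Ω*(Λ), x⁻¹ ∈ P}` the restricted source map `Z → Ω*(Λ)` and the
restricted range map `Z → Ω₀(Λ)` are open maps. -/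
theorem statement7 {G : Type*} [TopologicalSpace G] [Group G] [IsTopologicalGroup G]
    [T2Space G] [LocallyCompactSpace G] [SecondCountableTopology G]
    (Λ : Set G) (hΛ : IsClosed Λ) :
    IsClosed (transv Λ) ∧
    (∀ C ∈ phull Λ, ∃ x : G, CF.smul x C ∈ transv Λ) ∧
    IsOpenMap (fun p : ↥{q : G × CF G | q.2 ∈ phull Λ ∧ (q.1)⁻¹ ∈ q.2.1} =>
      (⟨p.1.2, p.2.1⟩ : ↥(phull Λ))) ∧
    IsOpenMap (fun p : ↥{q : G × CF G | q.2 ∈ phull Λ ∧ (q.1)⁻¹ ∈ q.2.1} =>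
      (⟨CF.smul p.1.1 p.1.2,
        smul_mem_hullSet p.2.1.1 p.1.1, one_mem_smul p.2.2⟩ : ↥(transv Λ))) :=
  statement7_general Λ
end

section
/- For a relatively separated subset Λ of a locally compact second-countable group G and any precompact open identity neighborhood U, the function P ↦ |P ∩ U| on the punctured hull of Λ is lower semicontinuous; and for any compact set K ⊆ G, one has rel(Λ)·|P ∩ K| ≥ limsup_{P'→P} |P' ∩ K|. In particular, if Λ is separated then P ↦ |P ∩ K| is upper semicontinuous. -/
open Pointwise Set MeasureTheory Filter Topology
open scoped ENNReal

set_option linter.unusedSectionVars false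
set_option linter.unusedVariables false

variable {G : Type*} [TopologicalSpace G] [Group G] [IsTopologicalGroup G]

variable {G : Type*} [TopologicalSpace G] [Group G] [IsTopologicalGroup G]

/-- The lower Beurling density `D⁻(Λ) = sup_K inf_x |Λ ∩ xK|/m(K)`. -/
noncomputable def lowerBD [MeasurableSpace G] (m : Measure G) (Λ : Set G) : ℝ≥0∞ :=
  ⨆ K ∈ {K : Set G | IsCompact K ∧ 0 < m K}, ⨅ x : G, ((Λ ∩ x • K).encard : ℝ≥0∞) / m K

/-- The upper Beurling density `D⁺(Λ) = inf_K sup_x |Λ ∩ xK|/m(K)`. -/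
noncomputable def upperBD [MeasurableSpace G] (m : Measure G) (Λ : Set G) : ℝ≥0∞ :=
  ⨅ K ∈ {K : Set G | IsCompact K ∧ 0 < m K}, ⨆ x : G, ((Λ ∩ x • K).encard : ℝ≥0∞) / m K

/-- The lower hull Beurling density `D⁻⁻(Λ) = sup_K inf_{P ∈ Ω*(Λ)} |P ∩ K|/m(K)`. -/
noncomputable def lowerHullBD [MeasurableSpace G] (m : Measure G) (Λ : Set G) : ℝ≥0∞ :=
  ⨆ K ∈ {K : Set G | IsCompact K ∧ 0 < m K},
    ⨅ P ∈ phull Λ, ((P.1 ∩ K).encard : ℝ≥0∞) / m K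

/-- The upper hull Beurling density `D⁺⁺(Λ) = inf_K sup_{P ∈ Ω*(Λ)} |P ∩ K|/m(K)`. -/
noncomputable def upperHullBD [MeasurableSpace G] (m : Measure G) (Λ : Set G) : ℝ≥0∞ :=
  ⨅ K ∈ {K : Set G | IsCompact K ∧ 0 < m K},
    ⨆ P ∈ phull Λ, ((P.1 ∩ K).encard : ℝ≥0∞) / m K

/-- The minimal relative separation constant `rel(Λ) = inf_U sup_x |Λ ∩ xU|`, the infimum
being over identity neighborhoods `U`. -/
noncomputable def relC (Λ : Set G) : ℝ≥0∞ :=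
  ⨅ U ∈ nhds (1 : G), ⨆ x : G, ((Λ ∩ x • U).encard : ℝ≥0∞)

/-- `F` is a (right) strong Følner sequence for `G`:
`m(F_n K ∩ F_nᶜ K)/m(F_n) → 0` for every compact `K`. The existence of such a sequence
witnesses amenability of `G`. -/
def StrongFolner [MeasurableSpace G] (m : Measure G) (F : ℕ → Set G) : Prop :=
  (∀ n, IsCompact (F n)) ∧ (∀ n, 0 < m (F n)) ∧
    ∀ K : Set G, IsCompact K →
      Tendsto (fun n => m ((F n * K) ∩ ((F n)ᶜ * K)) / m (F n)) atTop (nhds 0)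

/-!
Separating `m` points of `C ∩ V` by disjoint open sets `W p ⊆ V`, the Fell-open set of closed
sets meeting every `W p` consists of sets with at least `m` points in `V`; so `C ↦ |C ∩ V|` is
lower semicontinuous for open `V`, and the bound `|C ∩ V| ≤ sup_x |Λ ∩ xV|`, valid on the
translates of `Λ`, passes to their closure, the hull.

If `P ∩ K ⊆ t` with `t` finite and `U` is an open identity neighbourhood, the closed sets
missing the compact set `K \ tU` form a Fell neighbourhood of `P`; a member `P'` of the hull
lying in it meets `K` only inside the `|t|` translates `pU`, so
`|P' ∩ K| ≤ |t| · sup_x |Λ ∩ xU|`. Taking the infimum over `U` gives the `limsup` bound, and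
`rel(Λ) ≤ 1` when `Λ` is separated.
-/

lemma Set.encard_le_sum_encard_inter {α ι : Type*} {s : Set α} {t : Finset ι}
    {W : ι → Set α} (hs : s ⊆ ⋃ i ∈ t, W i) :
    s.encard ≤ ∑ i ∈ t, (s ∩ W i).encard := by
  refine (encard_le_encard fun a ha => ?_).trans (t.set_encard_biUnion_le fun i => s ∩ W i)
  obtain ⟨i, hi, haW⟩ := mem_iUnion₂.1 (hs ha)
  exact mem_biUnion hi ⟨ha, haW⟩

lemma isOpen_setOf_inter_eq_empty {K : Set G} (hK : IsCompact K) :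
    IsOpen {C : CF G | C.1 ∩ K = ∅} :=
  TopologicalSpace.isOpen_generateFrom_of_mem (Or.inl ⟨K, hK, rfl⟩)

lemma isOpen_setOf_inter_nonempty {V : Set G} (hV : IsOpen V) :
    IsOpen {C : CF G | (C.1 ∩ V).Nonempty} :=
  TopologicalSpace.isOpen_generateFrom_of_mem (Or.inr ⟨V, hV, rfl⟩)

lemma isOpen_setOf_natCast_le_encard_inter [T2Space G] {V : Set G} (hV : IsOpen V) (m : ℕ) :
    IsOpen {C : CF G | (m : ℕ∞) ≤ (C.1 ∩ V).encard} := by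
  refine isOpen_iff_forall_mem_open.2 fun C hC => ?_
  obtain ⟨s, hsC, hs⟩ := Set.exists_subset_encard_eq hC
  have hsfin : s.Finite := Set.finite_of_encard_eq_coe hs
  obtain ⟨W, hW, hdisj⟩ := hsfin.t2_separation
  refine ⟨⋂ p ∈ s, {C' : CF G | (C'.1 ∩ (W p ∩ V)).Nonempty}, fun C' hC' => ?_,
    hsfin.isOpen_biInter fun p _ => isOpen_setOf_inter_nonempty ((hW p).2.inter hV),
    mem_iInter₂.2 fun p hp => ⟨p, (hsC hp).1, (hW p).1, (hsC hp).2⟩⟩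
  rw [mem_iInter₂] at hC'
  choose! q hq using hC'
  have hinj : InjOn q s := fun p₁ hp₁ p₂ hp₂ he => by_contra fun hne =>
    (hdisj hp₁ hp₂ hne).le_bot ⟨(hq p₁ hp₁).2.1, he ▸ (hq p₂ hp₂).2.1⟩
  exact hs ▸ encard_le_encard_of_injOn (fun p hp => ⟨(hq p hp).1, (hq p hp).2.2⟩) hinj

lemma lowerSemicontinuous_encard_inter [T2Space G] {V : Set G} (hV : IsOpen V) :
    LowerSemicontinuous fun C : CF G => ((C.1 ∩ V).encard : ℝ≥0∞) := by
  have hlsc : LowerSemicontinuous fun C : CF G => (C.1 ∩ V).encard := by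
    refine lowerSemicontinuous_iff_isOpen_preimage.2 fun y => ?_
    cases y with
    | top => simp
    | coe k =>
      convert isOpen_setOf_natCast_le_encard_inter hV (k + 1) using 2
      ext C
      simp [ENat.add_one_le_iff (ENat.natCast_ne_top k)]
  exact ENat.continuous_toENNReal.comp_lowerSemicontinuous hlsc ENat.toENNReal_mono

noncomputable def relCount (Λ U : Set G) : ℝ≥0∞ :=
  ⨆ x : G, ((Λ ∩ x • U).encard : ℝ≥0∞)

lemma encard_inter_smul_le_relCount (Λ U : Set G) (x : G) :
    ((Λ ∩ x • U).encard : ℝ≥0∞) ≤ relCount Λ U :=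
  le_iSup (fun x => ((Λ ∩ x • U).encard : ℝ≥0∞)) x

lemma relCount_mono (Λ : Set G) {U V : Set G} (hUV : U ⊆ V) : relCount Λ U ≤ relCount Λ V :=
  iSup_mono fun x => ENat.toENNReal_mono
    (encard_le_encard (inter_subset_inter_right _ (smul_set_mono hUV)))

lemma relC_eq_iInf_relCount (Λ : Set G) : relC Λ = ⨅ U ∈ 𝓝 (1 : G), relCount Λ U := rfl

lemma encard_inter_le_relCount_of_mem_hullSet [T2Space G] {Λ V : Set G} {P : CF G}
    (hP : P ∈ hullSet Λ) (hV : IsOpen V) :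
    ((P.1 ∩ V).encard : ℝ≥0∞) ≤ relCount Λ V := by
  refine closure_minimal ?_ ((lowerSemicontinuous_encard_inter hV).isClosed_preimage _) hP
  rintro C ⟨y, hy⟩
  have hyV : y • Λ ∩ V = y • (Λ ∩ y⁻¹ • V) := by rw [smul_set_inter, smul_inv_smul]
  simp only [mem_preimage, mem_Iic, hy, hyV, encard_smul_set]
  exact encard_inter_smul_le_relCount Λ V y⁻¹

lemma encard_inter_smul_le_relCount_of_mem_hullSet [T2Space G] {Λ V : Set G} {P : CF G}
    (hP : P ∈ hullSet Λ) (hV : IsOpen V) (y : G) :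
    ((P.1 ∩ y • V).encard : ℝ≥0∞) ≤ relCount Λ V :=
  (encard_inter_le_relCount_of_mem_hullSet hP (hV.smul y)).trans <|
    iSup_le fun x => by simpa only [smul_smul] using encard_inter_smul_le_relCount Λ V (x * y)

lemma nonempty_of_mem_phull [T2Space G] {Λ : Set G} {P : CF G} (hP : P ∈ phull Λ) :
    Λ.Nonempty := by
  by_contra hΛ
  have hbound := encard_inter_le_relCount_of_mem_hullSet hP.1 isOpen_univ
  simp [relCount, not_nonempty_iff_eq_empty.1 hΛ, hP.2.ne_empty] at hbound

lemma one_le_relC {Λ : Set G} (hΛ : Λ.Nonempty) : 1 ≤ relC Λ := by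
  obtain ⟨l, hl⟩ := hΛ
  refine le_iInf₂ fun U hU => le_iSup_of_le l ?_
  have hmem : l ∈ Λ ∩ l • U := ⟨hl, 1, mem_of_mem_nhds hU, mul_one l⟩
  exact_mod_cast one_le_encard_iff_nonempty.2 ⟨l, hmem⟩

lemma relC_le_one {Λ : Set G} (hΛ : Separated Λ) : relC Λ ≤ 1 := by
  obtain ⟨U, hU, h1, hsep⟩ := hΛ
  exact iInf₂_le_of_le U (hU.mem_nhds h1) (iSup_le fun x => by exact_mod_cast hsep x)

lemma eventually_encard_inter_le_card_mul [T2Space G] {Λ K U : Set G} {P : CF G}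
    (hK : IsCompact K) (hU : IsOpen U) (h1 : (1 : G) ∈ U) {t : Finset G} (ht : P.1 ∩ K ⊆ t) :
    ∀ᶠ C in 𝓝 P, C ∈ hullSet Λ →
      ((C.1 ∩ K).encard : ℝ≥0∞) ≤ t.card * relCount Λ U := by
  have hPnhds : P ∈ {C : CF G | C.1 ∩ (K \ ⋃ p ∈ t, p • U) = ∅} :=
    eq_empty_iff_forall_notMem.2 fun a ⟨haP, haK, ha⟩ =>
      ha (mem_biUnion (ht ⟨haP, haK⟩) ⟨1, h1, mul_one a⟩)
  filter_upwards [(isOpen_setOf_inter_eq_empty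
    (hK.diff (isOpen_biUnion fun p _ => hU.smul p))).mem_nhds hPnhds] with C hC hCΛ
  have hcover : C.1 ∩ K ⊆ ⋃ p ∈ t, p • U := fun a ha => by_contra fun h =>
    eq_empty_iff_forall_notMem.1 hC a ⟨ha.1, ha.2, h⟩
  calc ((C.1 ∩ K).encard : ℝ≥0∞)
      ≤ ∑ p ∈ t, ((C.1 ∩ K ∩ p • U).encard : ℝ≥0∞) :=
        (ENat.toENNReal_le.2 (encard_le_sum_encard_inter hcover)).trans_eq
          (map_sum ENat.toENNRealRingHom _ t)
    _ ≤ ∑ _p ∈ t, relCount Λ U := Finset.sum_le_sum fun p _ =>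
        (ENat.toENNReal_mono (encard_le_encard (inter_subset_inter_left _ inter_subset_left))).trans
          (encard_inter_smul_le_relCount_of_mem_hullSet hCΛ hU p)
    _ = t.card * relCount Λ U := by rw [Finset.sum_const, nsmul_eq_mul]

lemma limsup_encard_inter_le_relC_mul [T2Space G] {Λ K : Set G} (hK : IsCompact K)
    (P : phull Λ) :
    limsup (fun P' : phull Λ => ((P'.1.1 ∩ K).encard : ℝ≥0∞)) (𝓝 P) ≤
      relC Λ * (P.1.1 ∩ K).encard := by
  by_cases hfin : (P.1.1 ∩ K).Finite
  · rw [hfin.encard_eq_coe_toFinset_card, ENat.toENNReal_coe, relC_eq_iInf_relCount, iInf_subtype',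
      ENNReal.iInf_mul (by simp)]
    refine le_iInf fun ⟨U, hU⟩ => ?_
    obtain ⟨V, hVU, hV, h1⟩ := mem_nhds_iff.1 hU
    refine limsup_le_of_le (by isBoundedDefault) ?_
    filter_upwards [continuous_subtype_val.continuousAt.eventually
      (eventually_encard_inter_le_card_mul (Λ := Λ) hK hV h1 (t := hfin.toFinset) (by simp))]
      with P' hP'
    calc _ ≤ _ := hP' P'.2.1
      _ ≤ _ := by rw [mul_comm]; exact mul_le_mul_left (relCount_mono Λ hVU) _
  · rw [encard_eq_top_iff.2 hfin, ENat.toENNReal_top,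
      ENNReal.mul_top (zero_lt_one.trans_le (one_le_relC (nonempty_of_mem_phull P.2))).ne']
    exact le_top

lemma upperSemicontinuous_encard_inter_of_separated [T2Space G] {Λ K : Set G}
    (hΛ : Separated Λ) (hK : IsCompact K) :
    UpperSemicontinuous fun P : phull Λ => ((P.1.1 ∩ K).encard : ℝ≥0∞) :=
  upperSemicontinuous_iff_limsup_le.2 fun P =>
    calc _ ≤ relC Λ * (P.1.1 ∩ K).encard := limsup_encard_inter_le_relC_mul hK P
      _ ≤ 1 * (P.1.1 ∩ K).encard := by gcongr; exact relC_le_one hΛ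
      _ = _ := one_mul _

theorem statement12_general {G : Type*} [TopologicalSpace G] [Group G] [IsTopologicalGroup G]
    [T2Space G] (Λ : Set G) :
    (∀ U : Set G, IsOpen U → (1 : G) ∈ U → IsCompact (closure U) →
      LowerSemicontinuous (fun P : ↥(phull Λ) => ((P.1.1 ∩ U).encard : ℝ≥0∞))) ∧
    (∀ K : Set G, IsCompact K → ∀ P : ↥(phull Λ),
      Filter.limsup (fun P' : ↥(phull Λ) => ((P'.1.1 ∩ K).encard : ℝ≥0∞)) (nhds P) ≤
        relC Λ * ((P.1.1 ∩ K).encard : ℝ≥0∞)) ∧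
    (Separated Λ → ∀ K : Set G, IsCompact K →
      UpperSemicontinuous (fun P : ↥(phull Λ) => ((P.1.1 ∩ K).encard : ℝ≥0∞))) :=
  ⟨fun _U hU _ _ => (lowerSemicontinuous_encard_inter hU).comp continuous_subtype_val,
    fun _K hK P => limsup_encard_inter_le_relC_mul hK P,
    fun hΛ _K hK => upperSemicontinuous_encard_inter_of_separated hΛ hK⟩

/-- Semicontinuity of counting functions on the punctured hull: for a relatively separated
`Λ ⊆ G`, the function `P ↦ |P ∩ U|` is lower semicontinuous on `Ω*(Λ)` for every
precompact open identity neighborhood `U`; for every compact `K`,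
`rel(Λ)·|P ∩ K| ≥ limsup_{P' → P} |P' ∩ K|`; and if `Λ` is separated then `P ↦ |P ∩ K|` is
upper semicontinuous. -/
theorem statement12 {G : Type*} [TopologicalSpace G] [Group G] [IsTopologicalGroup G]
    [T2Space G] [LocallyCompactSpace G] [SecondCountableTopology G]
    (Λ : Set G) (hΛ : RelSep Λ) :
    (∀ U : Set G, IsOpen U → (1 : G) ∈ U → IsCompact (closure U) →
      LowerSemicontinuous (fun P : ↥(phull Λ) => ((P.1.1 ∩ U).encard : ℝ≥0∞))) ∧
    (∀ K : Set G, IsCompact K → ∀ P : ↥(phull Λ),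
      Filter.limsup (fun P' : ↥(phull Λ) => ((P'.1.1 ∩ K).encard : ℝ≥0∞)) (nhds P) ≤
        relC Λ * ((P.1.1 ∩ K).encard : ℝ≥0∞)) ∧
    (Separated Λ → ∀ K : Set G, IsCompact K →
      UpperSemicontinuous (fun P : ↥(phull Λ) => ((P.1.1 ∩ K).encard : ℝ≥0∞))) :=
  statement12_general Λ
end
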